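/- arXiv:1908.05983 — 2 statements merged into one kernel-verified Lean document; each statement's English description precedes it below -/
import Mathlib

section
/- Let V_1,...,V_r have sizes n_1,...,n_r with k ≤ n_1, let V_1' ⊆ V_1 with |V_1'| = n_1 − k + 1, and let G be obtained from the complete r-partite graph K(V_1,...,V_r) by deleting all edges between V_1' and V_2. Then G contains no k vertex-disjoint copies of K_r, and the number of s-cliques of G equals ∑_{A ⊆ [r], |A| = s, {1,2} ⊄ A} ∏_{i∈A} n_i + (k−1) n_2 ∑_{A ⊆ [3,r], |A| = s−2} ∏_{i∈A} n_i. -/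
/-- `H` (a family of finite edge sets) contains a matching of size `k`:
`k` pairwise disjoint edges. -/
def hasMatching {α : Type*} [DecidableEq α] (H : Finset (Finset α)) (k : ℕ) : Prop :=
  ∃ M ⊆ H, M.card = k ∧ (M : Set (Finset α)).Pairwise Disjoint

/-- The edge set of the complete `r`-partite `s`-uniform hypergraph with parts
`V i = Fin (n i)`: all `s`-sets meeting each part in at most one vertex. -/
def crossEdges (r s : ℕ) (n : Fin r → ℕ) : Finset (Finset ((i : Fin r) × Fin (n i))) :=
  Finset.univ.filter fun S =>
    S.card = s ∧ ∀ i : Fin r, (S.filter fun v => v.1 = i).card ≤ 1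

/-- `T` is a copy of `K_r^{(s)}` in the `s`-graph `H`: it is a transversal
(one vertex in each part) all of whose `s`-subsets are edges of `H`. -/
def isKrCopy (r s : ℕ) (n : Fin r → ℕ) (H : Finset (Finset ((i : Fin r) × Fin (n i))))
    (T : Finset ((i : Fin r) × Fin (n i))) : Prop :=
  (∀ i : Fin r, (T.filter fun v => v.1 = i).card = 1) ∧ ∀ S ∈ T.powersetCard s, S ∈ H

/-- `H` contains `k` pairwise vertex-disjoint copies of `K_r^{(s)}`. -/
def hasKDisjointKr (r s k : ℕ) (n : Fin r → ℕ)
    (H : Finset (Finset ((i : Fin r) × Fin (n i)))) : Prop :=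
  ∃ C : Finset (Finset ((i : Fin r) × Fin (n i))), C.card = k ∧
    (∀ T ∈ C, isKrCopy r s n H T) ∧
    (C : Set (Finset ((i : Fin r) × Fin (n i)))).Pairwise Disjoint

/-- The number of `s`-cliques of the graph with edge set `H`
(an `s`-clique is an `s`-set all of whose `2`-subsets are edges). -/
def cliqueCount (r s : ℕ) (n : Fin r → ℕ)
    (H : Finset (Finset ((i : Fin r) × Fin (n i)))) : ℕ :=
  (Finset.univ.filter fun S : Finset ((i : Fin r) × Fin (n i)) =>
    S.card = s ∧ ∀ e ∈ S.powersetCard 2, e ∈ H).card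

/-!
A copy of `K_r` in `G` contains an edge of `G` from its `V_1`-vertex to its `V_2`-vertex, so its
`V_1`-vertex lies outside `V_1'`; vertex-disjoint copies therefore inject into `V_1 ∖ V_1'`, which
has only `k - 1` vertices.

An `s`-clique of `G` meets `s` distinct parts, one vertex each. Grouping the cliques by the set `A`
of parts they meet, they are all transversals of `A` when `{1, 2} ⊄ A`, and exactly the transversals
avoiding `V_1'` when `{1, 2} ⊆ A`; the second kind contribute `(k - 1) n_2 ∏_{A ∖ {1,2}} n_i`.
-/

open Finset

section
variable {r : ℕ} {n : Fin r → ℕ}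

local notation "Vtx" => (i : Fin r) × Fin (n i)

def crossEdgesWithout (V' : Finset Vtx) (q : Fin r) : Finset (Finset Vtx) :=
  (crossEdges r 2 n).filter fun e => ¬ ∃ u ∈ e, ∃ w ∈ e, u ∈ V' ∧ w.1 = q

lemma forall_mem_powersetCard_two_iff {α : Type*} [DecidableEq α] {S : Finset α}
    {P : Finset α → Prop} :
    (∀ e ∈ S.powersetCard 2, P e) ↔ ∀ u ∈ S, ∀ w ∈ S, u ≠ w → P {u, w} := by
  refine ⟨fun h u hu w hw huw => h _ ?_, fun h e he => ?_⟩
  · exact mem_powersetCard.2 ⟨insert_subset hu (singleton_subset_iff.2 hw), card_pair huw⟩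
  · obtain ⟨heS, he⟩ := mem_powersetCard.1 he
    obtain ⟨u, w, huw, rfl⟩ := card_eq_two.1 he
    exact h u (heS (mem_insert_self _ _)) w (heS (mem_insert_of_mem (mem_singleton_self _))) huw

lemma pair_mem_crossEdges_iff {u w : Vtx} (huw : u ≠ w) :
    {u, w} ∈ crossEdges r 2 n ↔ u.1 ≠ w.1 := by
  simp only [crossEdges, mem_filter, mem_univ, true_and, card_pair huw]
  refine ⟨fun h hp => ?_, fun hp i => ?_⟩
  · have := h u.1
    rw [filter_insert, filter_singleton] at this
    simp [hp, card_pair huw] at this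
  · rw [filter_insert, filter_singleton]
    split_ifs <;> simp_all

lemma card_notMem_part {p : Fin r} {V' : Finset Vtx} (hV' : ∀ v ∈ V', v.1 = p) :
    #{x : Fin (n p) | ⟨p, x⟩ ∉ V'} = n p - #V' := by
  have : #{x : Fin (n p) | ⟨p, x⟩ ∈ V'} = #V' := by
    refine (card_image_of_injective _
      (sigma_mk_injective (β := fun i => Fin (n i)) (i := p))).symm.trans (congrArg card ?_)
    ext v
    simp only [mem_image, mem_filter, mem_univ, true_and]
    refine ⟨fun ⟨x, hx, hxv⟩ => hxv ▸ hx, fun hv => ?_⟩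
    obtain ⟨i, x⟩ := v
    obtain rfl := hV' _ hv
    exact ⟨x, hv, rfl⟩
  have := card_filter_add_card_filter_not (s := (univ : Finset (Fin (n p))))
    (fun x => (⟨p, x⟩ : Vtx) ∈ V')
  rw [card_univ, Fintype.card_fin] at this
  omega

lemma card_transversals (A : Finset (Fin r)) (D : ∀ i, Finset (Fin (n i))) :
    #{S : Finset Vtx | S.image Sigma.fst = A ∧ (S : Set Vtx).InjOn Sigma.fst ∧
      ∀ v ∈ S, v.2 ∈ D v.1} = ∏ i ∈ A, #(D i) := by
  rw [← card_pi]
  symm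
  refine card_bij (fun g _ => A.attach.image fun a => ⟨a.1, g a.1 a.2⟩) ?_ ?_ ?_
  · intro g hg
    rw [mem_pi] at hg
    simp only [mem_filter, mem_univ, true_and, coe_image]
    refine ⟨?_, ?_, fun v hv => ?_⟩
    · ext i
      simp
    · rintro _ ⟨a, -, rfl⟩ _ ⟨b, -, rfl⟩ hab
      obtain rfl : a = b := Subtype.ext hab
      rfl
    · obtain ⟨a, -, rfl⟩ := mem_image.1 hv
      exact hg a.1 a.2
  · intro g _ g' _ h
    funext i hi
    have : (⟨i, g i hi⟩ : Vtx) ∈ A.attach.image fun a => ⟨a.1, g' a.1 a.2⟩ :=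
      h ▸ mem_image_of_mem _ (mem_attach A ⟨i, hi⟩)
    obtain ⟨⟨j, hj⟩, -, hji⟩ := mem_image.1 this
    obtain ⟨rfl, hx⟩ := Sigma.mk.inj_iff.1 hji
    exact (eq_of_heq hx).symm
  · intro S hS
    simp only [mem_filter, mem_univ, true_and] at hS
    obtain ⟨hSA, hinj, hD⟩ := hS
    have hpart : ∀ i ∈ A, ∃ x : Fin (n i), (⟨i, x⟩ : Vtx) ∈ S := by
      intro i hi
      obtain ⟨⟨j, x⟩, hx, rfl⟩ := mem_image.1 (hSA ▸ hi)
      exact ⟨x, hx⟩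
    choose g hg using hpart
    refine ⟨g, mem_pi.2 fun i hi => hD _ (hg i hi), ?_⟩
    refine eq_of_subset_of_card_le ?_ ?_
    · intro v hv
      obtain ⟨a, -, rfl⟩ := mem_image.1 hv
      exact hg a.1 a.2
    · rw [card_image_of_injOn (fun a _ b _ hab => Subtype.ext (congrArg Sigma.fst hab)),
        card_attach, ← hSA, card_image_of_injOn hinj]

lemma forall_pair_mem_crossEdges_iff {S : Finset Vtx} :
    (∀ e ∈ S.powersetCard 2, e ∈ crossEdges r 2 n) ↔ (S : Set Vtx).InjOn Sigma.fst := by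
  rw [forall_mem_powersetCard_two_iff]
  refine forall₂_congr fun u _ => forall₂_congr fun w _ => ?_
  exact ⟨fun h huw => by_contra fun hne => (pair_mem_crossEdges_iff hne).1 (h hne) huw,
    fun h hne => (pair_mem_crossEdges_iff hne).2 fun huw => hne (h huw)⟩

lemma forall_pair_mem_crossEdgesWithout_iff {V' : Finset Vtx} {q : Fin r}
    (hV' : ∀ v ∈ V', v.1 ≠ q) {S : Finset Vtx} :
    (∀ e ∈ S.powersetCard 2, e ∈ crossEdgesWithout V' q) ↔
      (S : Set Vtx).InjOn Sigma.fst ∧ ¬ ∃ u ∈ S, ∃ w ∈ S, u ∈ V' ∧ w.1 = q := by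
  simp only [crossEdgesWithout, mem_filter, forall_and, forall_pair_mem_crossEdges_iff]
  refine and_congr_right fun _ => ⟨fun h ⟨u, hu, w, hw, huV, hwq⟩ => ?_, fun h e he => ?_⟩
  · have huw : u ≠ w := fun huw => hV' u huV (huw ▸ hwq)
    exact forall_mem_powersetCard_two_iff.1 h u hu w hw huw
      ⟨u, mem_insert_self _ _, w, mem_insert_of_mem (mem_singleton_self _), huV, hwq⟩
  · have heS := (mem_powersetCard.1 he).1
    exact fun ⟨u, hu, w, hw, hbad⟩ => h ⟨u, heS hu, w, heS hw, hbad⟩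

lemma exists_mem_part_notMem_of_isKrCopy {V' : Finset Vtx} {p q : Fin r} (hpq : p ≠ q)
    {T : Finset Vtx} (hT : isKrCopy r 2 n (crossEdgesWithout V' q) T) :
    ∃ x : Fin (n p), (⟨p, x⟩ : Vtx) ∈ T ∧ (⟨p, x⟩ : Vtx) ∉ V' := by
  obtain ⟨hpart, hedges⟩ := hT
  have hmem : ∀ i, ∃ v ∈ T, v.1 = i := fun i => by
    obtain ⟨v, hv⟩ := card_eq_one.1 (hpart i)
    exact ⟨v, mem_filter.1 (hv ▸ mem_singleton_self v)⟩
  obtain ⟨⟨i, x⟩, hxT, rfl⟩ := hmem p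
  obtain ⟨w, hwT, hwq⟩ := hmem q
  have hxw : (⟨i, x⟩ : Vtx) ≠ w := fun h => hpq (h ▸ hwq)
  have hedge := forall_mem_powersetCard_two_iff.1 hedges _ hxT w hwT hxw
  refine ⟨x, hxT, fun hxV => (mem_filter.1 hedge).2 ?_⟩
  exact ⟨_, mem_insert_self _ _, w, mem_insert_of_mem (mem_singleton_self _), hxV, hwq⟩

lemma not_hasKDisjointKr_crossEdgesWithout {V' : Finset Vtx} {p q : Fin r} (hpq : p ≠ q)
    (hV' : ∀ v ∈ V', v.1 = p) {k : ℕ} (hk : n p - #V' < k) :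
    ¬ hasKDisjointKr r 2 k n (crossEdgesWithout V' q) := by
  rintro ⟨C, hCk, hcopy, hdisj⟩
  obtain ⟨T₀, hT₀⟩ : C.Nonempty := card_pos.1 (by omega)
  have : Nonempty (Fin (n p)) := ⟨(exists_mem_part_notMem_of_isKrCopy hpq (hcopy T₀ hT₀)).choose⟩
  choose! x hxT hxV using fun T hT => exists_mem_part_notMem_of_isKrCopy hpq (hcopy T hT)
  have hC : #C ≤ #{y : Fin (n p) | (⟨p, y⟩ : Vtx) ∉ V'} := by
    refine card_le_card_of_injOn x (fun T hT => by simpa using hxV T hT) fun T hT T' hT' h => ?_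
    by_contra hne
    exact disjoint_left.1 (hdisj hT hT' hne) (hxT T hT) (h ▸ hxT T' hT')
  rw [card_notMem_part hV'] at hC
  omega

lemma cliqueCount_crossEdgesWithout_eq_sum_prod_card {V' : Finset Vtx} {q : Fin r}
    (hV' : ∀ v ∈ V', v.1 ≠ q) (s : ℕ) :
    cliqueCount r s n (crossEdgesWithout V' q) =
      ∑ A ∈ powersetCard s univ, ∏ i ∈ A, #{x : Fin (n i) | q ∈ A → (⟨i, x⟩ : Vtx) ∉ V'} := by
  unfold cliqueCount
  simp_rw [forall_pair_mem_crossEdgesWithout_iff hV']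
  rw [card_eq_sum_card_fiberwise (f := fun S => S.image Sigma.fst) fun S hS => ?_]
  · refine sum_congr rfl fun A hA => ?_
    rw [← card_transversals, filter_filter]
    refine congrArg card (filter_congr fun S _ => ?_)
    have hcard := (mem_powersetCard.1 hA).2
    simp only [mem_filter, mem_univ, true_and, Sigma.eta]
    constructor
    · rintro ⟨⟨-, hinj, hbad⟩, rfl⟩
      refine ⟨rfl, hinj, fun u hu hq huV => hbad ?_⟩
      obtain ⟨w, hw, hwq⟩ := mem_image.1 hq
      exact ⟨u, hu, w, hw, huV, hwq⟩
    · rintro ⟨rfl, hinj, hD⟩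
      refine ⟨⟨by rw [← hcard, card_image_of_injOn hinj], hinj, ?_⟩, rfl⟩
      rintro ⟨u, hu, w, hw, huV, hwq⟩
      exact hD u hu (mem_image.2 ⟨w, hw, hwq⟩) huV
  · obtain ⟨hcard, hinj, -⟩ := (mem_filter.1 hS).2
    exact mem_powersetCard.2 ⟨subset_univ _, by rw [card_image_of_injOn hinj, hcard]⟩

lemma cliqueCount_crossEdgesWithout {V' : Finset Vtx} {p q : Fin r} (hpq : p ≠ q)
    (hV' : ∀ v ∈ V', v.1 = p) (s : ℕ) :
    cliqueCount r s n (crossEdgesWithout V' q) =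
      ∑ A ∈ powersetCard s univ, if p ∈ A ∧ q ∈ A
        then (n p - #V') * n q * ∏ i ∈ (A.erase p).erase q, n i else ∏ i ∈ A, n i := by
  rw [cliqueCount_crossEdgesWithout_eq_sum_prod_card fun v hv => hV' v hv ▸ hpq]
  refine sum_congr rfl fun A _ => ?_
  have hall : ∀ i, (i ≠ p ∨ q ∉ A) → #{x : Fin (n i) | q ∈ A → (⟨i, x⟩ : Vtx) ∉ V'} = n i := by
    intro i hi
    rw [filter_true_of_mem fun x _ hq hx => hi.elim (· (hV' _ hx)) (· hq), card_univ,
      Fintype.card_fin]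
  split_ifs with hA
  · rw [← mul_prod_erase A _ hA.1, ← mul_prod_erase _ _ (mem_erase.2 ⟨hpq.symm, hA.2⟩),
      hall q (.inl hpq.symm), ← mul_assoc,
      prod_congr rfl fun i hi => hall i (.inl (ne_of_mem_erase (mem_of_mem_erase hi)))]
    simp only [hA.2, forall_const, card_notMem_part hV']
  · refine prod_congr rfl fun i hi => hall i ?_
    by_contra! h
    exact hA ⟨h.1 ▸ hi, h.2⟩

lemma sum_powersetCard_filter_mem_and_mem {α M : Type*} [Fintype α] [DecidableEq α]
    [AddCommMonoid M] {p q : α} (hpq : p ≠ q) {U : Finset α} (hU : ∀ i, i ∈ U ↔ i ≠ p ∧ i ≠ q)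
    (m : ℕ) (f : Finset α → M) :
    ∑ A ∈ (powersetCard (m + 2) univ).filter (fun A => p ∈ A ∧ q ∈ A), f ((A.erase p).erase q) =
      ∑ B ∈ powersetCard m U, f B := by
  have hnot : ∀ B ∈ powersetCard m U, q ∉ B ∧ p ∉ insert q B := fun B hB => by
    have hBU := (mem_powersetCard.1 hB).1
    exact ⟨fun h => ((hU q).1 (hBU h)).2 rfl,
      by simpa [hpq] using fun h => ((hU p).1 (hBU h)).1 rfl⟩
  refine sum_nbij' (fun A => (A.erase p).erase q) (fun B => insert p (insert q B))
    ?_ ?_ ?_ ?_ fun _ _ => rfl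
  · intro A hA
    obtain ⟨⟨-, hcard⟩, hp, hq⟩ := by simpa only [mem_filter, mem_powersetCard] using hA
    refine mem_powersetCard.2 ⟨fun i hi => ?_, ?_⟩
    · obtain ⟨hiq, hip, -⟩ := by simpa only [mem_erase] using hi
      exact (hU i).2 ⟨hip, hiq⟩
    · rw [card_erase_of_mem (mem_erase.2 ⟨hpq.symm, hq⟩), card_erase_of_mem hp, hcard]
      rfl
  · intro B hB
    refine mem_filter.2 ⟨mem_powersetCard.2 ⟨subset_univ _, ?_⟩, by simp⟩
    rw [card_insert_of_notMem (hnot B hB).2, card_insert_of_notMem (hnot B hB).1,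
      (mem_powersetCard.1 hB).2]
  · intro A hA
    simp only [mem_filter] at hA
    rw [insert_erase (mem_erase.2 ⟨hpq.symm, hA.2.2⟩), insert_erase hA.2.1]
  · intro B hB
    rw [erase_insert (hnot B hB).2, erase_insert (hnot B hB).1]

end

theorem stmt17 (r s k : ℕ) (hs : 2 ≤ s) (hsr : s ≤ r) (hk : 1 ≤ k) (n : Fin r → ℕ)
    (hkn : k ≤ n ⟨0, by omega⟩)
    (V1' : Finset ((i : Fin r) × Fin (n i))) (hV1 : ∀ v ∈ V1', v.1.val = 0)
    (hV1card : V1'.card = n ⟨0, by omega⟩ - k + 1) :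
    -- `G` = complete multipartite graph minus all edges between `V1'` and `V_2`
    let G : Finset (Finset ((i : Fin r) × Fin (n i))) :=
      (crossEdges r 2 n).filter fun e => ¬ ∃ u ∈ e, ∃ w ∈ e, u ∈ V1' ∧ w.1.val = 1
    ¬ hasKDisjointKr r 2 k n G ∧
    cliqueCount r s n G
      = ∑ A ∈ ((Finset.univ : Finset (Fin r)).powersetCard s).filter
            (fun A => ¬((⟨0, by omega⟩ : Fin r) ∈ A ∧ (⟨1, by omega⟩ : Fin r) ∈ A)),
          ∏ i ∈ A, n i
        + (k - 1) * n ⟨1, by omega⟩ *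
          ∑ A ∈ (Finset.univ.filter fun i : Fin r => 2 ≤ i.val).powersetCard (s - 2),
            ∏ i ∈ A, n i := by
  intro G
  set p : Fin r := ⟨0, by omega⟩
  set q : Fin r := ⟨1, by omega⟩
  have hpq : p ≠ q := by simp [p, q]
  have hV' : ∀ v ∈ V1', v.1 = p := fun v hv => Fin.ext (hV1 v hv)
  have hG : G = crossEdgesWithout V1' q := filter_congr fun e _ => by simp [q, Fin.ext_iff]
  have hU : ∀ i, i ∈ univ.filter (fun i : Fin r => 2 ≤ i.val) ↔ i ≠ p ∧ i ≠ q := fun i => by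
    simp only [mem_filter, mem_univ, true_and, ne_eq, p, q, Fin.ext_iff]
    omega
  have hfree : n p - #V1' = k - 1 := by omega
  obtain ⟨m, rfl⟩ : ∃ m, s = m + 2 := ⟨s - 2, by omega⟩
  rw [hG]
  refine ⟨not_hasKDisjointKr_crossEdgesWithout hpq hV' (by omega), ?_⟩
  rw [cliqueCount_crossEdgesWithout hpq hV', sum_ite, add_comm, ← mul_sum,
    sum_powersetCard_filter_mem_and_mem hpq hU m fun B => ∏ i ∈ B, n i, hfree, Nat.add_sub_cancel]
end

section
/- Let H be a subhypergraph of K^{(s)}(V_1,...,V_r) (parts of sizes n_1 ≤ ... ≤ n_r) with no k vertex-disjoint copies of K^{(s)}_r. Choose (x_1,...,x_r) uniformly at random from V_1 × ⋯ × V_r and set T = {x_1,...,x_r}. Then the expected number of edges of H inside T equals ∑_{A ⊆ [r], |A|=s} e(V_A)/∏_{i∈A} n_i, and this expectation is at most C(r,s) − 1 + (k−1)/n_1. -/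
/-!
An edge `e` of `H` meeting the set of parts `A` lies in the vertex set `T` of exactly
`∏_{i ∉ A} n_i` transversals `x`; summing over the edges and grouping them by `A` gives the
formula for the expectation.

For the bound, `H[T]` has at most `C(r, s)` edges, and at most `C(r, s) - 1` unless `T` spans a
copy of `K_r^{(s)}`. Adding the same integer to every coordinate of `x`, modulo `n_i` in part `i`,
splits the transversals into `∏_{i ≠ 0} n_i` classes. Since `n_0 ≤ n_i`, two distinct members of a
class differ in the first coordinate and hence in every coordinate: their vertex sets are disjoint.
So each class contains at most `k - 1` copies of `K_r^{(s)}`.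
-/

open Finset

lemma sum_image_fst_eq_sum_powersetCard {ι : Type*} [Fintype ι] [DecidableEq ι]
    {α : ι → Type*} {M : Type*} [AddCommMonoid M] {H : Finset (Finset ((i : ι) × α i))} {s : ℕ}
    (hH : ∀ e ∈ H, #e = s ∧ Set.InjOn Sigma.fst (e : Set ((i : ι) × α i)))
    (f : Finset ι → M) :
    ∑ e ∈ H, f (e.image Sigma.fst) =
      ∑ A ∈ univ.powersetCard s, #(H.filter fun e => ∀ v ∈ e, v.1 ∈ A) • f A := by
  have hsupp : ∀ e ∈ H, #(e.image Sigma.fst) = s := fun e he => by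
    rw [card_image_of_injOn (hH e he).2, (hH e he).1]
  rw [← sum_fiberwise_of_maps_to fun e he =>
    mem_powersetCard.2 ⟨subset_univ _, hsupp e he⟩]
  refine sum_congr rfl fun A hA => ?_
  rw [sum_congr rfl fun e he => congrArg f (mem_filter.1 he).2, sum_const]
  congr 2
  refine filter_congr fun e he => ⟨fun h v hv => h ▸ mem_image_of_mem _ hv, fun h => ?_⟩
  refine eq_of_subset_of_card_le (image_subset_iff.2 h) ?_
  rw [hsupp e he, (mem_powersetCard.1 hA).2]

section Transversal

variable {ι : Type*} [Fintype ι] [DecidableEq ι] {α : ι → Type*} [∀ i, DecidableEq (α i)]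
  {H : Finset (Finset ((i : ι) × α i))}

def transversal (x : (i : ι) → α i) : Finset ((i : ι) × α i) :=
  univ.image fun i => ⟨i, x i⟩

lemma mem_transversal {x : (i : ι) → α i} {v : (i : ι) × α i} :
    v ∈ transversal x ↔ x v.1 = v.2 := by
  obtain ⟨i, a⟩ := v
  simp [transversal]

lemma card_transversal (x : (i : ι) → α i) : #(transversal x) = Fintype.card ι := by
  rw [transversal, card_image_of_injective _ fun i j h => (Sigma.mk.inj_iff.1 h).1, card_univ]

lemma transversal_injective : Function.Injective (transversal (α := α)) := fun x y h =>
  funext fun i => (mem_transversal.1 (h ▸ mem_transversal.2 rfl :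
    (⟨i, x i⟩ : (i : ι) × α i) ∈ transversal y)).symm

lemma disjoint_transversal {x y : (i : ι) → α i} (h : ∀ i, x i ≠ y i) :
    Disjoint (transversal x) (transversal y) :=
  disjoint_left.2 fun v hx hy =>
    h v.1 ((mem_transversal.1 hx).trans (mem_transversal.1 hy).symm)

lemma card_filter_fst_transversal (x : (i : ι) → α i) (i : ι) :
    #((transversal x).filter fun v => v.1 = i) = 1 := by
  refine card_eq_one.2 ⟨⟨i, x i⟩, ?_⟩
  ext ⟨j, a⟩
  simp only [mem_filter, mem_transversal, mem_singleton, Sigma.mk.inj_iff]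
  constructor
  · rintro ⟨rfl, rfl⟩
    exact ⟨rfl, .rfl⟩
  · rintro ⟨rfl, h⟩
    exact ⟨(eq_of_heq h).symm, rfl⟩

lemma card_filter_subset_transversal_le {s : ℕ} (hH : ∀ e ∈ H, #e = s) (x : (i : ι) → α i) :
    (#(H.filter (· ⊆ transversal x)) : ℝ) ≤
      (Fintype.card ι).choose s - 1 + if (transversal x).powersetCard s ⊆ H then 1 else 0 := by
  have hsub : H.filter (· ⊆ transversal x) ⊆ (transversal x).powersetCard s := fun e he =>
    mem_powersetCard.2 ⟨(mem_filter.1 he).2, hH e (mem_filter.1 he).1⟩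
  have hcard : #((transversal x).powersetCard s) = (Fintype.card ι).choose s := by
    rw [card_powersetCard, card_transversal]
  split_ifs with hx
  · have := card_le_card hsub
    rw [hcard] at this
    linarith [(Nat.cast_le (α := ℝ)).2 this]
  · obtain ⟨S, hS, hSH⟩ := not_subset.1 hx
    have := card_lt_card ⟨hsub, fun h => hSH (mem_filter.1 (h hS)).1⟩
    rw [hcard] at this
    have : (#(H.filter (· ⊆ transversal x)) : ℝ) + 1 ≤ (Fintype.card ι).choose s := by
      exact_mod_cast this
    linarith

variable [∀ i, Fintype (α i)]

lemma card_filter_subset_transversal {e : Finset ((i : ι) × α i)}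
    (he : Set.InjOn Sigma.fst (e : Set ((i : ι) × α i))) :
    #{x | e ⊆ transversal x} = ∏ i ∈ (e.image Sigma.fst)ᶜ, Fintype.card (α i) := by
  have hfilter : ({x | e ⊆ transversal x} : Finset ((i : ι) → α i)) =
      Fintype.piFinset fun i => {a | i ∈ e.image Sigma.fst → ⟨i, a⟩ ∈ e} := by
    ext x
    simp only [mem_filter, mem_univ, true_and, Fintype.mem_piFinset, mem_image]
    constructor
    · rintro h i ⟨v, hv, rfl⟩
      rwa [mem_transversal.1 (h hv)]
    · intro h v hv
      rw [← he (h v.1 ⟨v, hv, rfl⟩) hv rfl]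
      exact mem_transversal.2 rfl
  have hfactor : ∀ i, #({a | i ∈ e.image Sigma.fst → ⟨i, a⟩ ∈ e} : Finset (α i)) =
      if i ∈ (e.image Sigma.fst)ᶜ then Fintype.card (α i) else 1 := by
    intro i
    by_cases hi : i ∈ e.image Sigma.fst
    · obtain ⟨⟨i, b⟩, hb, rfl⟩ := mem_image.1 hi
      rw [if_neg (notMem_compl.2 hi)]
      refine card_eq_one.2 ⟨b, ?_⟩
      ext a
      simp only [mem_filter, mem_univ, true_and, mem_singleton]
      exact ⟨fun h => sigma_mk_injective (he (h hi) hb rfl), fun h _ => h ▸ hb⟩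
    · simp [hi]
  rw [hfilter, Fintype.card_piFinset, prod_congr rfl fun i _ => hfactor i, prod_ite_mem,
    univ_inter]

lemma sum_card_filter_subset_transversal
    (hH : ∀ e ∈ H, Set.InjOn Sigma.fst (e : Set ((i : ι) × α i))) :
    ∑ x, #(H.filter (· ⊆ transversal x)) =
      ∑ e ∈ H, ∏ i ∈ (e.image Sigma.fst)ᶜ, Fintype.card (α i) := by
  simp only [card_filter]
  rw [sum_comm]
  exact sum_congr rfl fun e he => by rw [← card_filter, card_filter_subset_transversal (hH e he)]

lemma sum_card_filter_subset_transversal_div [∀ i, Nonempty (α i)]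
    (hH : ∀ e ∈ H, Set.InjOn Sigma.fst (e : Set ((i : ι) × α i))) :
    (∑ x, (#(H.filter (· ⊆ transversal x)) : ℝ)) / ∏ i, (Fintype.card (α i) : ℝ) =
      ∑ e ∈ H, 1 / ∏ i ∈ e.image Sigma.fst, (Fintype.card (α i) : ℝ) := by
  rw [← Nat.cast_sum, sum_card_filter_subset_transversal hH, Nat.cast_sum, sum_div]
  refine sum_congr rfl fun e _ => ?_
  rw [← prod_mul_prod_compl (e.image Sigma.fst), Nat.cast_prod, div_mul_cancel_right₀, one_div]
  exact prod_ne_zero_iff.2 fun i _ => by positivity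

lemma sum_card_filter_subset_transversal_div_le [∀ i, Nonempty (α i)] {s : ℕ}
    (hH : ∀ e ∈ H, #e = s) :
    (∑ x, (#(H.filter (· ⊆ transversal x)) : ℝ)) / ∏ i, (Fintype.card (α i) : ℝ) ≤
      (Fintype.card ι).choose s - 1 +
        #{x | (transversal x).powersetCard s ⊆ H} / ∏ i, (Fintype.card (α i) : ℝ) := by
  have hN : (0 : ℝ) < ∏ i, (Fintype.card (α i) : ℝ) := prod_pos fun i _ => by positivity
  rw [div_le_iff₀ hN]
  calc (∑ x, (#(H.filter (· ⊆ transversal x)) : ℝ))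
      ≤ ∑ x, (((Fintype.card ι).choose s : ℝ) - 1 +
          if (transversal x).powersetCard s ⊆ H then 1 else 0) :=
        sum_le_sum fun x _ => card_filter_subset_transversal_le hH x
    _ = _ := by
        rw [sum_add_distrib, sum_const, sum_boole, card_univ, Fintype.card_pi, nsmul_eq_mul]
        push_cast
        field_simp

end Transversal

section ShiftClasses

open Fin.NatCast

variable {ι : Type*} {n : ι → ℕ} [∀ i, NeZero (n i)] (i₀ : ι)

def shiftToZero (x : (i : ι) → Fin (n i)) : (i : ι) → Fin (n i) :=
  fun i => x i - ((x i₀ : ℕ) : Fin (n i))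

lemma shiftToZero_apply_self (x : (i : ι) → Fin (n i)) : shiftToZero i₀ x i₀ = 0 := by
  rw [shiftToZero, Fin.cast_val_eq_self, sub_self]

lemma eq_or_forall_ne_of_shiftToZero_eq (hn : ∀ i, n i₀ ≤ n i) {x y : (i : ι) → Fin (n i)}
    (h : shiftToZero i₀ x = shiftToZero i₀ y) : x = y ∨ ∀ i, x i ≠ y i := by
  by_cases h₀ : x i₀ = y i₀
  · left
    funext i
    simpa only [shiftToZero, h₀, sub_left_inj] using congrFun h i
  · right
    intro i hxy
    have hi := congrFun h i
    rw [shiftToZero, shiftToZero, hxy, sub_right_inj] at hi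
    refine h₀ (Fin.val_injective ?_)
    rwa [Fin.ext_iff, Fin.val_cast_of_lt ((x i₀).2.trans_le (hn i)),
      Fin.val_cast_of_lt ((y i₀).2.trans_le (hn i))] at hi

theorem card_le_of_not_exists_pairwise_ne [Fintype ι] [DecidableEq ι] (hn : ∀ i, n i₀ ≤ n i)
    {k : ℕ} (F : Finset ((i : ι) → Fin (n i)))
    (hF : ∀ S ⊆ F, #S = k →
      ¬ (S : Set ((i : ι) → Fin (n i))).Pairwise fun x y => ∀ i, x i ≠ y i) :
    #F ≤ (k - 1) * ∏ i ∈ univ.erase i₀, n i := by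
  have hfiber : ∀ c ∈ F.image (shiftToZero i₀), #{x ∈ F | shiftToZero i₀ x = c} ≤ k - 1 := by
    intro c _
    by_contra! hlt
    obtain ⟨S, hS, hSk⟩ :=
      exists_subset_card_eq (show k ≤ #{x ∈ F | shiftToZero i₀ x = c} by omega)
    refine hF S (hS.trans (filter_subset _ _)) hSk fun x hx y hy hxy => ?_
    have hxy' := (mem_filter.1 (hS hx)).2.trans (mem_filter.1 (hS hy)).2.symm
    exact (eq_or_forall_ne_of_shiftToZero_eq i₀ hn hxy').resolve_left hxy
  have hkeys : #(F.image (shiftToZero i₀)) ≤ ∏ i ∈ univ.erase i₀, n i := calc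
    _ ≤ #(Fintype.piFinset fun i =>
          if i = i₀ then ({0} : Finset (Fin (n i))) else univ) := by
        refine card_le_card fun c hc => Fintype.mem_piFinset.2 fun i => ?_
        obtain ⟨x, -, rfl⟩ := mem_image.1 hc
        split_ifs with hi
        · subst hi
          exact mem_singleton.2 (shiftToZero_apply_self i x)
        · exact mem_univ _
    _ = ∏ i ∈ univ.erase i₀, n i := by
        rw [Fintype.card_piFinset, ← mul_prod_erase _ _ (mem_univ i₀), if_pos rfl,
          card_singleton, one_mul]
        exact prod_congr rfl fun i hi => by
          rw [if_neg (ne_of_mem_erase hi), card_univ, Fintype.card_fin]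
  calc #F ≤ (k - 1) * #(F.image (shiftToZero i₀)) := card_le_mul_card_image _ _ hfiber
    _ ≤ (k - 1) * ∏ i ∈ univ.erase i₀, n i := Nat.mul_le_mul_left _ hkeys

end ShiftClasses

lemma injOn_fst_of_mem_crossEdges {r s : ℕ} {n : Fin r → ℕ}
    {e : Finset ((i : Fin r) × Fin (n i))} (he : e ∈ crossEdges r s n) :
    Set.InjOn Sigma.fst (e : Set ((i : Fin r) × Fin (n i))) := fun v hv w hw h =>
  card_le_one.1 ((mem_filter.1 he).2.2 v.1) v (mem_filter.2 ⟨hv, rfl⟩) w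
    (mem_filter.2 ⟨hw, h.symm⟩)

lemma hasKDisjointKr_of_pairwise_ne {r s k : ℕ} {n : Fin r → ℕ}
    {H : Finset (Finset ((i : Fin r) × Fin (n i)))} (S : Finset ((i : Fin r) → Fin (n i)))
    (hSk : #S = k) (hS : ∀ x ∈ S, (transversal x).powersetCard s ⊆ H)
    (hne : (S : Set ((i : Fin r) → Fin (n i))).Pairwise fun x y => ∀ i, x i ≠ y i) :
    hasKDisjointKr r s k n H := by
  refine ⟨S.image transversal, by rw [card_image_of_injective _ transversal_injective, hSk],
    ?_, ?_⟩
  · intro T hT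
    obtain ⟨x, hx, rfl⟩ := mem_image.1 hT
    exact ⟨card_filter_fst_transversal x, hS x hx⟩
  · rw [coe_image]
    exact Set.Pairwise.image (hne.mono' fun x y h => disjoint_transversal h)

theorem stmt18 (r s k : ℕ) (hr : 0 < r) (n : Fin r → ℕ) (hmono : Monotone n)
    (hk : 1 ≤ k) (hkn : k ≤ n ⟨0, hr⟩)
    (H : Finset (Finset ((i : Fin r) × Fin (n i)))) (hH : H ⊆ crossEdges r s n)
    (hfree : ¬ hasKDisjointKr r s k n H) :
    -- the expected number of edges of `H` inside a uniformly random transversal `T`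
    let expe : ℝ :=
      (∑ x : (i : Fin r) → Fin (n i),
        ((H.filter fun e =>
          e ⊆ Finset.univ.image fun i => (⟨i, x i⟩ : (i : Fin r) × Fin (n i))).card : ℝ))
      / ∏ i : Fin r, (n i : ℝ)
    expe = (∑ A ∈ (Finset.univ : Finset (Fin r)).powersetCard s,
        ((H.filter fun e => ∀ v ∈ e, v.1 ∈ A).card : ℝ) / ∏ i ∈ A, (n i : ℝ)) ∧
    expe ≤ (Nat.choose r s : ℝ) - 1 + ((k : ℝ) - 1) / (n ⟨0, hr⟩ : ℝ) := by
  intro expe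
  have h₀ : ∀ i, n ⟨0, hr⟩ ≤ n i := fun i => hmono (Fin.le_iff_val_le_val.2 (Nat.zero_le _))
  have hpos : ∀ i, 0 < n i := fun i => (hk.trans hkn).trans (h₀ i)
  have : ∀ i, NeZero (n i) := fun i => ⟨(hpos i).ne'⟩
  have hcross : ∀ e ∈ H, #e = s ∧ Set.InjOn Sigma.fst (e : Set ((i : Fin r) × Fin (n i))) :=
    fun e he => ⟨(mem_filter.1 (hH he)).2.1, injOn_fst_of_mem_crossEdges (hH he)⟩
  constructor
  · have h := sum_card_filter_subset_transversal_div fun e he => (hcross e he).2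
    simp only [Fintype.card_fin] at h
    rw [show expe = _ from h]
    convert sum_image_fst_eq_sum_powersetCard hcross (fun A => 1 / ∏ i ∈ A, (n i : ℝ)) using 2
    rw [nsmul_eq_mul, mul_one_div]
    -- the two sides decide the filter predicate with different `Decidable` instances
    congr!
  · have hcopies := card_le_of_not_exists_pairwise_ne ⟨0, hr⟩ h₀
      {x | (transversal x).powersetCard s ⊆ H} fun S hS hSk hne =>
        hfree (hasKDisjointKr_of_pairwise_ne S hSk (fun x hx => (mem_filter.1 (hS hx)).2) hne)
    have hP : (0 : ℝ) < ∏ i ∈ univ.erase ⟨0, hr⟩, (n i : ℝ) :=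
      prod_pos fun i _ => by exact_mod_cast hpos i
    have h := sum_card_filter_subset_transversal_div_le (H := H) fun e he => (hcross e he).1
    simp only [Fintype.card_fin] at h
    calc expe ≤ _ := h
      _ ≤ (r.choose s : ℝ) - 1 + ((k : ℝ) - 1) * (∏ i ∈ univ.erase ⟨0, hr⟩, (n i : ℝ)) /
            ((n ⟨0, hr⟩ : ℝ) * ∏ i ∈ univ.erase ⟨0, hr⟩, (n i : ℝ)) := by
          rw [mul_prod_erase univ (fun i => (n i : ℝ)) (mem_univ _)]
          gcongr
          rw [← Nat.cast_pred hk]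
          exact_mod_cast hcopies
      _ = _ := by rw [mul_div_mul_right _ _ hP.ne']
end
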